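/- arXiv:2507.09165 — 3 statements merged into one kernel-verified Lean document; each statement's English description precedes it below -/
import Mathlib

section
/- (Tighter upper bound for the spectral norm, Theorem 3.2 of the paper) Let A be an n×n real symmetric matrix and let λ₁ ≥ λ₂ ≥ … ≥ λₙ ≥ 0 be the eigenvalues of A². Fix σ ∈ ℝ and assume λ₁ is the eigenvalue of A² closest to σ, i.e., |σ − λ₁| ≤ |σ − λᵢ| for all i. Then for every unit vector q ∈ ℝⁿ, ‖A‖₂ ≤ sqrt(σ + ‖A² q − σ q‖₂). -/
open Matrix

/-- Euclidean norm of a real vector. -/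
noncomputable def vecNorm {n : ℕ} (v : Fin n → ℝ) : ℝ :=
  Real.sqrt (∑ i, v i ^ 2)

/-- Spectral norm (operator 2-norm) of a real matrix. -/
noncomputable def specNorm {n : ℕ} (A : Matrix (Fin n) (Fin n) ℝ) : ℝ :=
  ‖(Matrix.toEuclideanCLM (𝕜 := ℝ) A : EuclideanSpace ℝ (Fin n) →L[ℝ] EuclideanSpace ℝ (Fin n))‖

/-- Isometry of an orthogonal matrix on dot products. -/
lemma orth_mulVec_dot {n : ℕ} {M : Matrix (Fin n) (Fin n) ℝ} (hM : Mᵀ * M = 1)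
    (w : Fin n → ℝ) : (M *ᵥ w) ⬝ᵥ (M *ᵥ w) = w ⬝ᵥ w := by
  rw [Matrix.dotProduct_mulVec, ← Matrix.mulVec_transpose, Matrix.mulVec_mulVec, hM,
    Matrix.one_mulVec]

lemma dot_self_eq_sum_sq {n : ℕ} (v : Fin n → ℝ) : v ⬝ᵥ v = ∑ i, v i ^ 2 := by
  simp [dotProduct, sq]

/-- Tighter upper bound for the spectral norm: if `λ₁ = l i₀` is the largest eigenvalue of
`A²` and is the eigenvalue of `A²` closest to `σ`, then for every unit vector `q`,
`‖A‖₂ ≤ sqrt(σ + ‖A² q − σ q‖₂)`. -/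
theorem spectral_norm_tighter_upper_bound {n : ℕ} (A Q : Matrix (Fin n) (Fin n) ℝ)
    (l : Fin n → ℝ) (i₀ : Fin n) (σ : ℝ)
    (hA : A.IsSymm) (hQ : Qᵀ * Q = 1) (hA2 : A * A = Q * Matrix.diagonal l * Qᵀ)
    (hmax : ∀ i, l i ≤ l i₀)
    (hclosest : ∀ i, |σ - l i₀| ≤ |σ - l i|) :
    ∀ q : Fin n → ℝ, vecNorm q = 1 →
      specNorm A ≤ Real.sqrt (σ + vecNorm ((A * A) *ᵥ q - σ • q)) := by
  intro q hq
  have hQQ : Q * Qᵀ = 1 := mul_eq_one_comm.mp hQ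
  have hQt : (Qᵀ)ᵀ * Qᵀ = 1 := by rw [Matrix.transpose_transpose]; exact hQQ
  -- key decomposition: (A*A) *ᵥ x = Q *ᵥ (fun i => l i * (Qᵀ *ᵥ x) i)
  have hdec : ∀ x : Fin n → ℝ,
      (A * A) *ᵥ x = Q *ᵥ (fun i => l i * (Qᵀ *ᵥ x) i) := by
    intro x
    rw [hA2, ← Matrix.mulVec_mulVec, ← Matrix.mulVec_mulVec]
    have : Matrix.diagonal l *ᵥ (Qᵀ *ᵥ x) = fun i => l i * (Qᵀ *ᵥ x) i := by
      funext i; exact Matrix.mulVec_diagonal _ _ _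
    rw [this]
  -- each eigenvalue is nonnegative
  have hl0 : ∀ i, 0 ≤ l i := by
    intro i
    have hx : Qᵀ *ᵥ (Q *ᵥ Pi.single i 1) = Pi.single i 1 := by
      rw [Matrix.mulVec_mulVec, hQ, Matrix.one_mulVec]
    set x : Fin n → ℝ := Q *ᵥ Pi.single i 1 with hxdef
    have h1 : x ⬝ᵥ ((A * A) *ᵥ x) = l i := by
      rw [hdec x, hx, Matrix.dotProduct_mulVec, ← Matrix.mulVec_transpose, hxdef,
        Matrix.mulVec_mulVec, hQ, Matrix.one_mulVec]
      simp [dotProduct, Pi.single_apply]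
    have h2 : x ⬝ᵥ ((A * A) *ᵥ x) = (A *ᵥ x) ⬝ᵥ (A *ᵥ x) := by
      rw [← Matrix.mulVec_mulVec, Matrix.dotProduct_mulVec, ← Matrix.mulVec_transpose, hA.eq]
    rw [← h1, h2, dot_self_eq_sum_sq]
    exact Finset.sum_nonneg fun j _ => sq_nonneg _
  have hl0' : 0 ≤ l i₀ := hl0 i₀
  -- spectral norm bound for A*A
  have hbound : specNorm (A * A) ≤ l i₀ := by
    apply ContinuousLinearMap.opNorm_le_bound _ hl0'
    intro x
    have hnx : ‖x‖ = Real.sqrt ((fun i => x i) ⬝ᵥ (fun i => x i)) := by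
      rw [EuclideanSpace.norm_eq, dot_self_eq_sum_sq]
      simp [Real.norm_eq_abs, sq_abs]
    have hTx : ‖(Matrix.toEuclideanCLM (𝕜 := ℝ) (A * A)) x‖
        = Real.sqrt (((A * A) *ᵥ (fun i => x i)) ⬝ᵥ ((A * A) *ᵥ (fun i => x i))) := by
      rw [EuclideanSpace.norm_eq, dot_self_eq_sum_sq]
      simp only [Real.norm_eq_abs, sq_abs]
      rfl
    rw [hTx, hnx]
    set y : Fin n → ℝ := Qᵀ *ᵥ (fun i => x i) with hy
    have h1 : ((A * A) *ᵥ (fun i => x i)) ⬝ᵥ ((A * A) *ᵥ (fun i => x i))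
        = ∑ i, (l i * y i) ^ 2 := by
      rw [hdec, orth_mulVec_dot hQ, dot_self_eq_sum_sq]
    have h2 : (fun i => x i) ⬝ᵥ (fun i => x i) = ∑ i, y i ^ 2 := by
      rw [← orth_mulVec_dot hQt, ← hy, dot_self_eq_sum_sq]
    rw [h1, h2, ← Real.sqrt_sq hl0', ← Real.sqrt_mul (sq_nonneg _)]
    apply Real.sqrt_le_sqrt
    rw [Finset.mul_sum]
    apply Finset.sum_le_sum
    intro i _
    rw [mul_pow]
    exact mul_le_mul_of_nonneg_right (by nlinarith [hl0 i, hl0', hmax i]) (sq_nonneg _)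
  -- specNorm A ^ 2 = specNorm (A * A)
  have hsq : specNorm A ^ 2 = specNorm (A * A) := by
    have hstar : star A = A := by
      rw [Matrix.star_eq_conjTranspose]
      ext i j
      simp [Matrix.conjTranspose_apply]
      exact congrFun (congrFun hA i) j
    have := CStarRing.norm_star_mul_self
      (x := (Matrix.toEuclideanCLM (𝕜 := ℝ) A : EuclideanSpace ℝ (Fin n) →L[ℝ] _))
    rw [← map_star, hstar, ← _root_.map_mul] at this
    rw [specNorm, specNorm, this, sq]
  -- lower bound on the residual
  set y : Fin n → ℝ := Qᵀ *ᵥ q with hy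
  have hq1 : ∑ i, y i ^ 2 = 1 := by
    have : ∑ i, q i ^ 2 = 1 := by
      have h0 : (0:ℝ) ≤ ∑ i, q i ^ 2 := Finset.sum_nonneg fun j _ => sq_nonneg _
      have := hq
      rw [vecNorm] at this
      nlinarith [Real.sq_sqrt h0, this]
    rw [← dot_self_eq_sum_sq, ← orth_mulVec_dot hQt q, ← hy, dot_self_eq_sum_sq] at this
    exact this
  have hres : (A * A) *ᵥ q - σ • q = Q *ᵥ (fun i => (l i - σ) * y i) := by
    have hqQ : σ • q = Q *ᵥ (fun i => σ * y i) := by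
      have : Q *ᵥ (σ • y) = σ • (Q *ᵥ y) := Matrix.mulVec_smul _ _ _
      have h2 : Q *ᵥ y = q := by rw [hy, Matrix.mulVec_mulVec, hQQ, Matrix.one_mulVec]
      rw [show (fun i => σ * y i) = σ • y from rfl, this, h2]
    rw [hdec q, hqQ, ← Matrix.mulVec_sub]
    have : ((fun i => l i * y i) - fun i => σ * y i) = fun i => (l i - σ) * y i := by
      funext i; simp [sub_mul]
    rw [← hy] at *
    rw [this]
  have hresnorm : vecNorm ((A * A) *ᵥ q - σ • q) = Real.sqrt (∑ i, ((l i - σ) * y i) ^ 2) := by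
    rw [vecNorm, hres, ← dot_self_eq_sum_sq, orth_mulVec_dot hQ, dot_self_eq_sum_sq]
  have hlow : l i₀ - σ ≤ vecNorm ((A * A) *ᵥ q - σ • q) := by
    rw [hresnorm]
    have h1 : |σ - l i₀| ≤ Real.sqrt (∑ i, ((l i - σ) * y i) ^ 2) := by
      have : (σ - l i₀) ^ 2 * 1 ≤ ∑ i, ((l i - σ) * y i) ^ 2 := by
        rw [← hq1, Finset.mul_sum]
        apply Finset.sum_le_sum
        intro i _
        have h : (σ - l i₀) ^ 2 ≤ (σ - l i) ^ 2 := by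
          have := hclosest i
          nlinarith [abs_nonneg (σ - l i₀), sq_abs (σ - l i₀), sq_abs (σ - l i),
            mul_self_le_mul_self (abs_nonneg (σ - l i₀)) this]
        nlinarith [sq_nonneg (y i), h]
      calc |σ - l i₀| = Real.sqrt ((σ - l i₀) ^ 2) := (Real.sqrt_sq_eq_abs _).symm
        _ ≤ _ := Real.sqrt_le_sqrt (by linarith)
    calc l i₀ - σ ≤ |σ - l i₀| := by rw [abs_sub_comm]; exact le_abs_self _
      _ ≤ _ := h1
  -- conclude
  apply Real.le_sqrt_of_sq_le
  rw [hsq]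
  linarith [hbound, hlow]
end

section
/- (Minimax optimality of the greedy composite construction, Theorem 3.1 of the paper) Let ε ∈ (0,1), let T ≥ 1 and degrees d₁,…,d_T be given. Suppose there are real numbers a₁ = ε, b₁ = 1, and for each t = 1,…,T an odd polynomial f*_t of degree at most d_t and numbers a_{t+1}, b_{t+1} such that: (i) 0 < a_t ≤ b_t; (ii) f*_t is the unique minimizer, among odd polynomials of degree at most d_t, of max over x ∈ [a_t,b_t] of |f(x) − 1|; (iii) the image f*_t([a_t,b_t]) equals the interval [a_{t+1}, b_{t+1}] with a_{t+1} > 0. Then the composition f*_T ∘ f*_{T−1} ∘ ⋯ ∘ f*_1 attains the infimum of max over x ∈ [−1,−ε] ∪ [ε,1] of |f_T ∘ f_{T−1} ∘ ⋯ ∘ f_1(x) − f_sign(x)| over all tuples (f_1,…,f_T) with f_t an odd polynomial of degree at most d_t; that is, max over x ∈ [−1,−ε] ∪ [ε,1] of |f*_T ∘ ⋯ ∘ f*_1(x) − f_sign(x)| equals this infimum. -/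
/-- The scalar sign function: `1` for positive, `1/2` at zero, `−1` for negative. -/
noncomputable def fsign (x : ℝ) : ℝ := if 0 < x then 1 else if x = 0 then 1 / 2 else -1

/-- Evaluation of the composition `f_t ∘ f_{t−1} ∘ ⋯ ∘ f_1` (0-indexed: `fs (t-1) ∘ ⋯ ∘ fs 0`). -/
noncomputable def compEval (fs : ℕ → Polynomial ℝ) : ℕ → ℝ → ℝ
  | 0 => fun x => x
  | t + 1 => fun x => (fs t).eval (compEval fs t x)

/-- Uniform error of the `T`-fold composition against `f_sign` over `[−1,−ε] ∪ [ε,1]`. -/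
noncomputable def signErr (ε : ℝ) (T : ℕ) (fs : ℕ → Polynomial ℝ) : ℝ :=
  sSup ((fun x => |compEval fs T x - fsign x|) '' (Set.Icc (-1 : ℝ) (-ε) ∪ Set.Icc ε 1))


open Set Polynomial in
noncomputable def compTo (fs : ℕ → Polynomial ℝ) : ℕ → ℕ → ℝ → ℝ
  | _, 0 => fun x => x
  | s, (k+1) => fun x => compTo fs (s+1) k ((fs s).eval x)

open Set Polynomial

lemma compTo_succ_right (fs : ℕ → Polynomial ℝ) (s k : ℕ) (x : ℝ) :
    compTo fs s (k+1) x = (fs (s+k)).eval (compTo fs s k x) := by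
  induction k generalizing s x with
  | zero => simp [compTo]
  | succ k ih =>
      show compTo fs (s+1) (k+1) ((fs s).eval x) = _
      rw [ih]
      show _ = (fs (s + (k+1))).eval (compTo fs (s+1) k ((fs s).eval x))
      congr 2
      omega

lemma compEval_eq (fs : ℕ → Polynomial ℝ) (t : ℕ) (x : ℝ) :
    compEval fs t x = compTo fs 0 t x := by
  induction t with
  | zero => rfl
  | succ t ih =>
      show (fs t).eval (compEval fs t x) = _
      rw [compTo_succ_right, ih]
      norm_num

lemma compTo_congr {fs gs : ℕ → Polynomial ℝ} {s k : ℕ}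
    (h : ∀ t, s ≤ t → t < s + k → fs t = gs t) (x : ℝ) :
    compTo fs s k x = compTo gs s k x := by
  induction k generalizing s x with
  | zero => rfl
  | succ k ih =>
      show compTo fs (s+1) k ((fs s).eval x) = compTo gs (s+1) k ((gs s).eval x)
      rw [h s le_rfl (by omega), ih (fun t ht ht' => h t (by omega) (by omega))]

lemma compTo_continuous (fs : ℕ → Polynomial ℝ) (s k : ℕ) :
    Continuous (compTo fs s k) := by
  induction k generalizing s with
  | zero => exact continuous_id
  | succ k ih => exact (ih (s+1)).comp ((fs s).continuous)

lemma compTo_odd {fs : ℕ → Polynomial ℝ} {s k : ℕ}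
    (h : ∀ t, s ≤ t → t < s + k → ∀ x : ℝ, (fs t).eval (-x) = -(fs t).eval x) (x : ℝ) :
    compTo fs s k (-x) = -compTo fs s k x := by
  induction k generalizing s x with
  | zero => rfl
  | succ k ih =>
      show compTo fs (s+1) k ((fs s).eval (-x)) = -compTo fs (s+1) k ((fs s).eval x)
      rw [h s le_rfl (by omega), ih (fun t ht ht' => h t (by omega) (by omega))]

lemma compTo_zero {fs : ℕ → Polynomial ℝ} {s k : ℕ}
    (h : ∀ t, s ≤ t → t < s + k → ∀ x : ℝ, (fs t).eval (-x) = -(fs t).eval x) :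
    compTo fs s k 0 = 0 := by
  have := compTo_odd h (0 : ℝ)
  rw [neg_zero] at this; linarith

lemma abs_sub_one_le {c d y : ℝ} (hy : y ∈ Icc c d) : |y - 1| ≤ max (1 - c) (d - 1) :=
  abs_sub_le_iff.mpr ⟨le_trans (by linarith [hy.2]) (le_max_right _ _),
    le_trans (by linarith [hy.1]) (le_max_left _ _)⟩

lemma sup_abs_Icc {c d : ℝ} (h : c ≤ d) :
    sSup ((fun y => |y - 1|) '' Icc c d) = max (1 - c) (d - 1) := by
  have hbdd : BddAbove ((fun y => |y - 1|) '' Icc c d) := by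
    refine ⟨max (1 - c) (d - 1), ?_⟩
    rintro _ ⟨y, hy, rfl⟩
    exact abs_sub_one_le hy
  apply le_antisymm
  · apply csSup_le ((nonempty_Icc.mpr h).image _)
    rintro _ ⟨y, hy, rfl⟩
    exact abs_sub_one_le hy
  · apply max_le
    · calc 1 - c ≤ |c - 1| := by rw [abs_sub_comm]; exact le_abs_self _
        _ ≤ _ := le_csSup hbdd ⟨c, ⟨le_rfl, h⟩, rfl⟩
    · calc d - 1 ≤ |d - 1| := le_abs_self _
        _ ≤ _ := le_csSup hbdd ⟨d, ⟨h, le_rfl⟩, rfl⟩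

lemma image_Icc_eq {f : ℝ → ℝ} (hf : Continuous f) {c d : ℝ} (h : c ≤ d) :
    ∃ c' d' : ℝ, c' ≤ d' ∧ f '' Icc c d = Icc c' d' := by
  have hconn : IsConnected (f '' Icc c d) :=
    ⟨(nonempty_Icc.mpr h).image f, (isPreconnected_Icc).image f hf.continuousOn⟩
  have hcomp : IsCompact (f '' Icc c d) := isCompact_Icc.image hf
  refine ⟨sInf (f '' Icc c d), sSup (f '' Icc c d), ?_, eq_Icc_of_connected_compact hconn hcomp⟩
  obtain ⟨y, hy⟩ := hconn.nonempty
  exact le_trans (csInf_le hcomp.bddBelow hy) (le_csSup hcomp.bddAbove hy)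


/-- Minimax optimality of the greedy composite construction: if each `fstar t` is the unique
minimax odd polynomial approximation (of degree at most `d t`) of the constant `1` on
`[a t, b t]`, where `[a (t+1), b (t+1)]` is the image of `[a t, b t]` under `fstar t` and
`a 0 = ε, b 0 = 1`, then the composition `fstar (T-1) ∘ ⋯ ∘ fstar 0` attains the infimum of
the uniform error against `f_sign` over `[−1,−ε] ∪ [ε,1]` among all such composite tuples. -/
theorem greedy_composite_minimax_optimal (ε : ℝ) (hε0 : 0 < ε) (hε1 : ε < 1)
    (T : ℕ) (hT : 1 ≤ T) (d : ℕ → ℕ) (a b : ℕ → ℝ) (fstar : ℕ → Polynomial ℝ)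
    (ha0 : a 0 = ε) (hb0 : b 0 = 1)
    (hab : ∀ t, t < T → 0 < a t ∧ a t ≤ b t)
    (hodd : ∀ t, t < T → ∀ x : ℝ, (fstar t).eval (-x) = -(fstar t).eval x)
    (hdeg : ∀ t, t < T → (fstar t).natDegree ≤ d t)
    (hmin : ∀ t, t < T → ∀ h : Polynomial ℝ, h.natDegree ≤ d t →
      (∀ x : ℝ, h.eval (-x) = -h.eval x) →
      sSup ((fun x => |(fstar t).eval x - 1|) '' Set.Icc (a t) (b t))
        ≤ sSup ((fun x => |h.eval x - 1|) '' Set.Icc (a t) (b t)))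
    (huniq : ∀ t, t < T → ∀ h : Polynomial ℝ, h.natDegree ≤ d t →
      (∀ x : ℝ, h.eval (-x) = -h.eval x) →
      (∀ h' : Polynomial ℝ, h'.natDegree ≤ d t → (∀ x : ℝ, h'.eval (-x) = -h'.eval x) →
        sSup ((fun x => |h.eval x - 1|) '' Set.Icc (a t) (b t))
          ≤ sSup ((fun x => |h'.eval x - 1|) '' Set.Icc (a t) (b t))) →
      h = fstar t)
    (himg : ∀ t, t < T →
      (fun x => (fstar t).eval x) '' Set.Icc (a t) (b t) = Set.Icc (a (t + 1)) (b (t + 1)))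
    (hapos : ∀ t, t < T → 0 < a (t + 1)) :
    signErr ε T fstar
      = sInf {E : ℝ | ∃ fs : ℕ → Polynomial ℝ,
          (∀ t, t < T → (fs t).natDegree ≤ d t ∧ ∀ x : ℝ, (fs t).eval (-x) = -(fs t).eval x) ∧
          E = signErr ε T fs} := by
  -- basic interval facts up to T
  have habT : ∀ t, t ≤ T → 0 < a t ∧ a t ≤ b t := by
    intro t ht
    rcases Nat.lt_or_ge t T with h | h
    · exact hab t h
    · have heq : t = T := by omega
      subst heq
      obtain ⟨T', rfl⟩ : ∃ T', t = T' + 1 := ⟨t - 1, by omega⟩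
      have hT' : T' < T' + 1 := by omega
      refine ⟨hapos T' hT', ?_⟩
      have hne : (Set.Icc (a (T'+1)) (b (T'+1))).Nonempty := by
        rw [← himg T' hT']
        exact ((Set.nonempty_Icc.mpr (hab T' hT').2).image _)
      exact Set.nonempty_Icc.mp hne
  -- comparison helper
  have cmp : ∀ s, s < T → ∀ (r : ℝ) (h : Polynomial ℝ), h.natDegree ≤ d s →
      (∀ x : ℝ, h.eval (-x) = -h.eval x) →
      (∀ x ∈ Set.Icc (a s) (b s), |h.eval x - 1| ≤ r) →
      (1 - a (s+1)) ≤ r ∧ (b (s+1) - 1) ≤ r := by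
    intro s hs r h hd ho hb'
    have himgs := himg s hs
    have hab' := hab s hs
    have hbnd : BddAbove ((fun x => |(fstar s).eval x - 1|) '' Set.Icc (a s) (b s)) :=
      (isCompact_Icc.image (((fstar s).continuous.sub continuous_const).abs)).bddAbove
    have hmem : ∀ y ∈ Set.Icc (a (s+1)) (b (s+1)),
        |y - 1| ≤ sSup ((fun x => |(fstar s).eval x - 1|) '' Set.Icc (a s) (b s)) := by
      intro y hy
      rw [← himgs] at hy
      obtain ⟨x, hx, rfl⟩ := hy
      exact le_csSup hbnd ⟨x, hx, rfl⟩
    have hle : sSup ((fun x => |(fstar s).eval x - 1|) '' Set.Icc (a s) (b s)) ≤ r := by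
      refine le_trans (hmin s hs h hd ho) (csSup_le ((Set.nonempty_Icc.mpr hab'.2).image _) ?_)
      rintro _ ⟨x, hx, rfl⟩
      exact hb' x hx
    have habs1 := habT (s+1) (by omega)
    constructor
    · calc 1 - a (s+1) ≤ |a (s+1) - 1| := by rw [abs_sub_comm]; exact le_abs_self _
        _ ≤ _ := hmem _ ⟨le_rfl, habs1.2⟩
        _ ≤ r := hle
    · calc b (s+1) - 1 ≤ |b (s+1) - 1| := le_abs_self _
        _ ≤ _ := hmem _ ⟨habs1.2, le_rfl⟩
        _ ≤ r := hle
  -- the sum of interval endpoints is 2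
  have hsum : ∀ s, s < T → a (s+1) + b (s+1) = 2 := by
    intro s hs
    have ha' : 0 < a (s+1) := hapos s hs
    have hab' : a (s+1) ≤ b (s+1) := (habT (s+1) (by omega)).2
    have hs2 : 0 < a (s+1) + b (s+1) := by linarith
    set μ : ℝ := 2 / (a (s+1) + b (s+1)) with hμdef
    have hμ : 0 < μ := by positivity
    set h : Polynomial ℝ := μ • fstar s with hhdef
    have hdh : h.natDegree ≤ d s := le_trans (natDegree_smul_le _ _) (hdeg s hs)
    have hev : ∀ x : ℝ, h.eval x = μ * (fstar s).eval x := by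
      intro x; simp [hhdef, smul_eq_mul]
    have hoh : ∀ x : ℝ, h.eval (-x) = -h.eval x := by
      intro x; rw [hev, hev, hodd s hs]; ring
    set r : ℝ := (b (s+1) - a (s+1)) / (a (s+1) + b (s+1)) with hrdef
    have e1 : μ * a (s+1) - 1 = -r := by rw [hμdef, hrdef]; field_simp; ring
    have e2 : μ * b (s+1) - 1 = r := by rw [hμdef, hrdef]; field_simp; ring
    have hbound : ∀ x ∈ Set.Icc (a s) (b s), |h.eval x - 1| ≤ r := by
      intro x hx
      have hgx : (fstar s).eval x ∈ Set.Icc (a (s+1)) (b (s+1)) := by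
        rw [← himg s hs]; exact Set.mem_image_of_mem _ hx
      rw [hev, abs_le]
      constructor
      · linarith [mul_le_mul_of_nonneg_left hgx.1 hμ.le, e1]
      · linarith [mul_le_mul_of_nonneg_left hgx.2 hμ.le, e2]
    obtain ⟨h1', h2'⟩ := cmp s hs r h hdh hoh hbound
    rw [hrdef] at h1' h2'
    have h1'' : (1 - a (s+1)) * (a (s+1) + b (s+1)) ≤ b (s+1) - a (s+1) :=
      (le_div_iff₀ hs2).mp h1'
    have h2'' : (b (s+1) - 1) * (a (s+1) + b (s+1)) ≤ b (s+1) - a (s+1) :=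
      (le_div_iff₀ hs2).mp h2'
    nlinarith [mul_pos ha' (lt_of_lt_of_le ha' hab')]
  have hsumT : a T + b T = 2 := by
    obtain ⟨T', rfl⟩ : ∃ T', T = T' + 1 := ⟨T - 1, by omega⟩
    exact hsum T' (by omega)
  -- image chain for the greedy composition
  have himgchain : ∀ k s, s + k = T →
      compTo fstar s k '' Set.Icc (a s) (b s) = Set.Icc (a T) (b T) := by
    intro k
    induction k with
    | zero =>
        intro s hs
        have : s = T := by omega
        subst this
        exact Set.image_id _
    | succ k ih =>
        intro s hs
        have hcomp : compTo fstar s (k+1) = (compTo fstar (s+1) k) ∘ (fun x => (fstar s).eval x) := rfl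
        rw [hcomp, Set.image_comp, himg s (by omega), ih (s+1) (by omega)]
  -- ratio step: image of admissible odd polynomial has ratio at least the greedy one
  have ratio_step : ∀ s, s < T → ∀ (g : Polynomial ℝ), g.natDegree ≤ d s →
      (∀ x : ℝ, g.eval (-x) = -g.eval x) →
      ∀ c e c' e' : ℝ, 0 < c → c ≤ e → b s * c ≤ a s * e →
      (fun x => g.eval x) '' Set.Icc c e = Set.Icc c' e' → 0 < c' →
      b (s+1) * c' ≤ a (s+1) * e' := by
    intro s hs g hdg hog c e c' e' hc hce hratio himge hc'
    have hce' : c' ≤ e' := by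
      have hne : (Set.Icc c' e').Nonempty := by
        rw [← himge]; exact (Set.nonempty_Icc.mpr hce).image _
      exact Set.nonempty_Icc.mp hne
    have habs := hab s hs
    have hsum2 : 0 < c' + e' := by linarith
    set μ : ℝ := 2 / (c' + e') with hμdef
    have hμ : 0 < μ := by positivity
    set ν : ℝ := c / a s with hνdef
    have hν : 0 < ν := div_pos hc habs.1
    set h : Polynomial ℝ := μ • (g.comp (Polynomial.C ν * Polynomial.X)) with hhdef
    have hdh : h.natDegree ≤ d s := by
      refine le_trans (natDegree_smul_le _ _) (le_trans natDegree_comp_le ?_)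
      calc g.natDegree * (Polynomial.C ν * Polynomial.X).natDegree
          ≤ g.natDegree * 1 := Nat.mul_le_mul_left _
            (le_trans (Polynomial.natDegree_C_mul_le _ _) (by simp))
        _ ≤ d s := by simpa using hdg
    have hev : ∀ x : ℝ, h.eval x = μ * g.eval (ν * x) := by
      intro x; simp [hhdef, Polynomial.eval_comp, smul_eq_mul]
    have hoh : ∀ x : ℝ, h.eval (-x) = -h.eval x := by
      intro x; rw [hev, hev, mul_neg, hog]; ring
    set r : ℝ := (e' - c') / (c' + e') with hrdef
    have e1 : μ * c' - 1 = -r := by rw [hμdef, hrdef]; field_simp; ring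
    have e2 : μ * e' - 1 = r := by rw [hμdef, hrdef]; field_simp; ring
    clear_value μ ν h r
    have hbound : ∀ x ∈ Set.Icc (a s) (b s), |h.eval x - 1| ≤ r := by
      intro x hx
      have hνx : ν * x ∈ Set.Icc c e := by
        constructor
        · calc c = ν * a s := by rw [hνdef]; exact (div_mul_cancel₀ c habs.1.ne').symm
            _ ≤ ν * x := mul_le_mul_of_nonneg_left hx.1 hν.le
        · calc ν * x ≤ ν * b s := mul_le_mul_of_nonneg_left hx.2 hν.le
            _ ≤ e := by
                rw [hνdef, div_mul_eq_mul_div, div_le_iff₀ habs.1]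
                nlinarith
      have hgx : g.eval (ν * x) ∈ Set.Icc c' e' := by
        rw [← himge]; exact Set.mem_image_of_mem _ hνx
      rw [hev, abs_le]
      constructor
      · linarith [mul_le_mul_of_nonneg_left hgx.1 hμ.le, e1]
      · linarith [mul_le_mul_of_nonneg_left hgx.2 hμ.le, e2]
    obtain ⟨h1', h2'⟩ := cmp s hs r h hdh hoh hbound
    rw [hrdef] at h2'
    have h2'' : (b (s+1) - 1) * (c' + e') ≤ e' - c' := (le_div_iff₀ hsum2).mp h2'
    have ha2 : a (s+1) = 2 - b (s+1) := by linarith [hsum s hs]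
    rw [sub_mul, one_mul, mul_add] at h2''
    rw [ha2, sub_mul]
    linarith
  -- the key induction: any admissible tail composition on a wider-ratio interval has error ≥ 1 - a T
  have key : ∀ k s, s + k = T →
      ∀ fs : ℕ → Polynomial ℝ,
      (∀ t, s ≤ t → t < T → (fs t).natDegree ≤ d t ∧ ∀ x : ℝ, (fs t).eval (-x) = -(fs t).eval x) →
      ∀ c e : ℝ, 0 < c → c ≤ e → b s * c ≤ a s * e →
      1 - a T ≤ sSup ((fun y => |compTo fs s k y - 1|) '' Set.Icc c e) := by
    intro k
    induction k with
    | zero =>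
        intro s hsT fs hfs c e hc hce hratio
        have hsT' : s = T := by omega
        subst hsT'
        have hrw : sSup ((fun y => |compTo fs s 0 y - 1|) '' Set.Icc c e) = max (1 - c) (e - 1) :=
          sup_abs_Icc hce
        rw [hrw]
        rcases le_or_gt c (a s) with h | h
        · exact le_trans (by linarith) (le_max_left _ _)
        · refine le_trans ?_ (le_max_right _ _)
          have haT : 0 < a s := (habT s le_rfl).1
          have hbT : 0 < b s := lt_of_lt_of_le haT (habT s le_rfl).2
          have h1 : b s * a s < b s * c := by nlinarith
          have h2 : b s < e := by nlinarith
          linarith [hsumT]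
    | succ k ih =>
        intro s hsT fs hfs c e hc hce hratio
        have hsT' : s < T := by omega
        obtain ⟨hdg, hog⟩ := hfs s le_rfl hsT'
        obtain ⟨c', e', hce', himge⟩ := image_Icc_eq ((fs s).continuous) hce
        have hrw : (fun y => |compTo fs s (k+1) y - 1|) '' Set.Icc c e
            = (fun z => |compTo fs (s+1) k z - 1|) '' Set.Icc c' e' := by
          rw [← himge, ← Set.image_comp]; rfl
        rw [hrw]
        have hoddk : ∀ x : ℝ, compTo fs (s+1) k (-x) = -compTo fs (s+1) k x :=
          compTo_odd (fun t ht ht' => (hfs t (by omega) (by omega)).2)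
        have hbddk : ∀ p q : ℝ, BddAbove ((fun z => |compTo fs (s+1) k z - 1|) '' Set.Icc p q) :=
          fun p q => (isCompact_Icc.image
            (((compTo_continuous fs (s+1) k).sub continuous_const).abs)).bddAbove
        have haT : 0 < a T := (habT T le_rfl).1
        rcases lt_or_ge 0 c' with hc' | hc'
        · -- image interval is positive
          have hratio' := ratio_step s hsT' (fs s) hdg hog c e c' e' hc hce hratio himge hc'
          exact ih (s+1) (by omega) fs (fun t ht ht' => hfs t (by omega) ht') c' e' hc' hce' hratio'
        · rcases lt_or_ge e' 0 with he' | he'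
          · -- image interval is negative
            have himgneg : (fun x => (-(fs s)).eval x) '' Set.Icc c e = Set.Icc (-e') (-c') := by
              ext v
              constructor
              · rintro ⟨x, hx, rfl⟩
                have hmem : (fs s).eval x ∈ Set.Icc c' e' := by
                  rw [← himge]; exact Set.mem_image_of_mem _ hx
                simp only [Polynomial.eval_neg, Set.mem_Icc]
                exact ⟨by linarith [hmem.2], by linarith [hmem.1]⟩
              · intro hv
                have hmem : -v ∈ Set.Icc c' e' := ⟨by linarith [hv.2], by linarith [hv.1]⟩
                rw [← himge] at hmem
                obtain ⟨x, hx, hxv⟩ := hmem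
                refine ⟨x, hx, ?_⟩
                show Polynomial.eval x (-(fs s)) = v
                have hxv' : Polynomial.eval x (fs s) = -v := hxv
                rw [Polynomial.eval_neg, hxv', neg_neg]
            have hratio' := ratio_step s hsT' (-(fs s))
              (by rw [Polynomial.natDegree_neg]; exact hdg)
              (fun x => by simp [Polynomial.eval_neg, hog])
              c e (-e') (-c') hc hce hratio himgneg (by linarith)
            rcases Nat.eq_zero_or_pos k with hk0 | hkpos
            · subst hk0
              have hmem : |(e' : ℝ) - 1| ∈
                  (fun z => |compTo fs (s+1) 0 z - 1|) '' Set.Icc c' e' := ⟨e', ⟨hce', le_rfl⟩, rfl⟩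
              have hsup := le_csSup (hbddk c' e') hmem
              have habs1 : (1 : ℝ) ≤ |e' - 1| := by
                rw [abs_sub_comm, abs_of_nonneg (by linarith)]; linarith
              linarith
            · obtain ⟨k', rfl⟩ : ∃ k', k = k' + 1 := ⟨k - 1, by omega⟩
              set fs' : ℕ → Polynomial ℝ := fun t => if t = s + 1 + k' then -(fs t) else fs t
                with hfs'def
              have hfs'eq : ∀ t, s + 1 ≤ t → t < (s + 1) + k' → fs' t = fs t := by
                intro t ht ht'
                rw [hfs'def]
                simp only
                rw [if_neg (by omega)]
              have hflip : ∀ w : ℝ, compTo fs' (s+1) (k'+1) w = -(compTo fs (s+1) (k'+1) w) := by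
                intro w
                rw [compTo_succ_right, compTo_succ_right,
                  compTo_congr (fs := fs') (gs := fs) hfs'eq w]
                have hfs'top : fs' (s+1+k') = -(fs (s+1+k')) := by rw [hfs'def]; simp
                rw [hfs'top, Polynomial.eval_neg]
              have hsetrw : (fun z => |compTo fs (s+1) (k'+1) z - 1|) '' Set.Icc c' e'
                  = (fun w => |compTo fs' (s+1) (k'+1) w - 1|) '' Set.Icc (-e') (-c') := by
                ext v
                constructor
                · rintro ⟨z, hz, rfl⟩
                  refine ⟨-z, ⟨by linarith [hz.2], by linarith [hz.1]⟩, ?_⟩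
                  show |compTo fs' (s+1) (k'+1) (-z) - 1| = |compTo fs (s+1) (k'+1) z - 1|
                  rw [hflip, hoddk, neg_neg]
                · rintro ⟨w, hw, rfl⟩
                  refine ⟨-w, ⟨by linarith [hw.2], by linarith [hw.1]⟩, ?_⟩
                  show |compTo fs (s+1) (k'+1) (-w) - 1| = |compTo fs' (s+1) (k'+1) w - 1|
                  rw [hoddk, hflip]
              rw [hsetrw]
              have hfs'adm : ∀ t, s + 1 ≤ t → t < T →
                  (fs' t).natDegree ≤ d t ∧ ∀ x : ℝ, (fs' t).eval (-x) = -(fs' t).eval x := by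
                intro t ht ht'
                obtain ⟨hd0, ho0⟩ := hfs t (by omega) ht'
                by_cases htk : t = s + 1 + k'
                · constructor
                  · rw [hfs'def]; simp only [if_pos htk, Polynomial.natDegree_neg]; exact hd0
                  · intro x
                    rw [hfs'def]; simp [if_pos htk, Polynomial.eval_neg, ho0]
                · rw [hfs'def]; simp only [if_neg htk]; exact ⟨hd0, ho0⟩
              exact ih (s+1) (by omega) fs' hfs'adm (-e') (-c') (by linarith) (by linarith) hratio'
          · -- 0 lies in the image interval
            have hmem : (1 : ℝ) ∈ (fun z => |compTo fs (s+1) k z - 1|) '' Set.Icc c' e' := by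
              refine ⟨0, ⟨hc', he'⟩, ?_⟩
              show |compTo fs (s+1) k 0 - 1| = 1
              rw [compTo_zero (fun t ht ht' => (hfs t (by omega) (by omega)).2)]
              norm_num
            have hsup := le_csSup (hbddk c' e') hmem
            linarith

  -- symmetrize: signErr of an odd tuple equals the one-sided error
  have signErr_eq : ∀ fs : ℕ → Polynomial ℝ,
      (∀ t, t < T → ∀ x : ℝ, (fs t).eval (-x) = -(fs t).eval x) →
      signErr ε T fs = sSup ((fun x => |compTo fs 0 T x - 1|) '' Set.Icc ε 1) := by
    intro fs hoddfs
    unfold signErr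
    congr 1
    have hoddF : ∀ x : ℝ, compTo fs 0 T (-x) = -compTo fs 0 T x :=
      compTo_odd (fun t ht ht' => hoddfs t (by omega))
    ext v
    simp only [Set.mem_image, Set.mem_union]
    constructor
    · rintro ⟨x, hx | hx, rfl⟩
      · refine ⟨-x, ⟨by linarith [hx.2], by linarith [hx.1]⟩, ?_⟩
        have hxneg : fsign x = -1 := by
          unfold fsign
          rw [if_neg (by intro h0; linarith [hx.2]), if_neg (by intro h0; subst h0; linarith [hx.2])]
        show |compTo fs 0 T (-x) - 1| = |compEval fs T x - fsign x|
        rw [compEval_eq, hxneg, hoddF,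
          show -compTo fs 0 T x - 1 = -(compTo fs 0 T x - (-1)) by ring, abs_neg]
      · refine ⟨x, hx, ?_⟩
        have hxpos : fsign x = 1 := by unfold fsign; rw [if_pos (by linarith [hx.1])]
        show |compTo fs 0 T x - 1| = |compEval fs T x - fsign x|
        rw [compEval_eq, hxpos]
    · rintro ⟨y, hy, rfl⟩
      refine ⟨y, Or.inr hy, ?_⟩
      have hypos : fsign y = 1 := by unfold fsign; rw [if_pos (by linarith [hy.1])]
      show |compEval fs T y - fsign y| = |compTo fs 0 T y - 1|
      rw [compEval_eq, hypos]
  -- the value of the greedy error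
  have hstar : sSup ((fun x => |compTo fstar 0 T x - 1|) '' Set.Icc ε 1) = 1 - a T := by
    have hIcc : Set.Icc ε (1:ℝ) = Set.Icc (a 0) (b 0) := by rw [ha0, hb0]
    have h1 : (fun x => |compTo fstar 0 T x - 1|) '' Set.Icc (a 0) (b 0)
        = (fun y => |y - 1|) '' Set.Icc (a T) (b T) := by
      rw [← himgchain T 0 (by omega), ← Set.image_comp]
      rfl
    rw [hIcc, h1, sup_abs_Icc (habT T le_rfl).2, max_eq_left (by linarith [hsumT])]
  -- conclude
  have hmemS : signErr ε T fstar ∈ {E : ℝ | ∃ fs : ℕ → Polynomial ℝ,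
      (∀ t, t < T → (fs t).natDegree ≤ d t ∧ ∀ x : ℝ, (fs t).eval (-x) = -(fs t).eval x) ∧
      E = signErr ε T fs} := ⟨fstar, fun t ht => ⟨hdeg t ht, hodd t ht⟩, rfl⟩
  have hlb : ∀ E ∈ {E : ℝ | ∃ fs : ℕ → Polynomial ℝ,
      (∀ t, t < T → (fs t).natDegree ≤ d t ∧ ∀ x : ℝ, (fs t).eval (-x) = -(fs t).eval x) ∧
      E = signErr ε T fs}, signErr ε T fstar ≤ E := by
    rintro E ⟨fs, hfs, rfl⟩
    rw [signErr_eq fstar hodd, signErr_eq fs (fun t ht => (hfs t ht).2), hstar]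
    exact key T 0 (by omega) fs (fun t _ ht' => hfs t ht') ε 1 hε0 hε1.le
      (by rw [ha0, hb0]; linarith)
  exact le_antisymm (le_csInf ⟨_, hmemS⟩ hlb) (csInf_le ⟨signErr ε T fstar, hlb⟩ hmemS)
end

section
/- Let X be an n×n real symmetric matrix with spectral decomposition X = Q Λ Qᵀ, Q orthogonal, Λ = diag(λ₁,…,λₙ), and suppose all eigenvalues satisfy |λᵢ| ≤ 1. Let g be a real polynomial and ε ≥ 0 such that |g(x) − f_sign(x)| ≤ ε for all x ∈ [−1,−δ] ∪ [δ,1] and |g(x)| ≤ 1 + ε for all x ∈ [−δ,δ], where 0 < δ < 1 and f_sign(x) = 1 for x > 0, −1 for x < 0. Then ‖(1/2)·X·(Iₙ + g(X)) − Π(X)‖_F ≤ √n · max{ε/2, δ·(1 + ε/2)}, where Π(X) = Q · diag(max{λᵢ,0}) · Qᵀ is the PSD-cone projection of X. -/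
open Matrix

/-- Frobenius norm of a real matrix. -/
noncomputable def frobNorm {n : ℕ} (A : Matrix (Fin n) (Fin n) ℝ) : ℝ :=
  Real.sqrt (∑ i, ∑ j, (A i j) ^ 2)

section aux
variable {n : ℕ} (Q : Matrix (Fin n) (Fin n) ℝ) (l : Fin n → ℝ)

lemma myConjPow (hQ : Qᵀ * Q = 1) (k : ℕ) :
    (Q * Matrix.diagonal l * Qᵀ) ^ k = Q * (Matrix.diagonal l) ^ k * Qᵀ := by
  have hQ' : Q * Qᵀ = 1 := mul_eq_one_comm.mp hQ
  induction k with
  | zero => simp [hQ']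
  | succ k ih =>
    rw [pow_succ, ih, pow_succ]
    calc Q * diagonal l ^ k * Qᵀ * (Q * diagonal l * Qᵀ)
        = Q * diagonal l ^ k * (Qᵀ * Q) * diagonal l * Qᵀ := by
          simp only [Matrix.mul_assoc]
      _ = Q * (diagonal l ^ k * diagonal l) * Qᵀ := by
          rw [hQ]; simp only [Matrix.mul_assoc, Matrix.one_mul]

lemma myAevalConjDiag (hQ : Qᵀ * Q = 1) (g : Polynomial ℝ) :
    (Polynomial.aeval (Q * Matrix.diagonal l * Qᵀ)) g
      = Q * Matrix.diagonal (fun i => g.eval (l i)) * Qᵀ := by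
  have hQ' : Q * Qᵀ = 1 := mul_eq_one_comm.mp hQ
  induction g using Polynomial.induction_on' with
  | add p q hp hq =>
    rw [map_add, hp, hq, ← Matrix.add_mul, ← Matrix.mul_add, Matrix.diagonal_add]
    congr 2
    funext i; simp
  | monomial k a =>
    rw [Polynomial.aeval_monomial, myConjPow Q l hQ k, Matrix.diagonal_pow]
    have h2 : (fun i => (Polynomial.monomial k a).eval (l i)) = fun i => a * l i ^ k := by
      funext i; simp [Polynomial.eval_monomial]
    rw [h2, ← Algebra.smul_def]
    have : Matrix.diagonal (fun i => a * l i ^ k) = a • Matrix.diagonal (l ^ k) := by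
      rw [← Matrix.diagonal_smul]; congr 1
    rw [this, Matrix.mul_smul, Matrix.smul_mul]

lemma myFrobSq (A : Matrix (Fin n) (Fin n) ℝ) :
    ∑ i, ∑ j, (A i j) ^ 2 = Matrix.trace (A * Aᵀ) := by
  simp [Matrix.trace, Matrix.diag, Matrix.mul_apply, sq]

lemma myFrobConj (hQ : Qᵀ * Q = 1) (A : Matrix (Fin n) (Fin n) ℝ) :
    frobNorm (Q * A * Qᵀ) = frobNorm A := by
  unfold frobNorm
  rw [myFrobSq, myFrobSq]
  congr 1
  have h1 : (Q * A * Qᵀ) * (Q * A * Qᵀ)ᵀ = Q * (A * Aᵀ) * Qᵀ := by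
    rw [Matrix.transpose_mul, Matrix.transpose_mul, Matrix.transpose_transpose]
    calc Q * A * Qᵀ * (Qᵀᵀ * (Aᵀ * Qᵀ)) = Q * A * (Qᵀ * Q) * (Aᵀ * Qᵀ) := by
          rw [Matrix.transpose_transpose]; simp only [Matrix.mul_assoc]
      _ = Q * (A * Aᵀ) * Qᵀ := by rw [hQ]; simp only [Matrix.mul_assoc, Matrix.mul_one]
  rw [h1, Matrix.trace_mul_cycle, ← Matrix.mul_assoc, hQ, Matrix.one_mul]

lemma myScalarBound (g : Polynomial ℝ) (ε δ : ℝ) (hε : 0 ≤ ε) (hδ0 : 0 < δ) (hδ1 : δ < 1)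
    (hg : ∀ x ∈ Set.Icc (-1 : ℝ) (-δ) ∪ Set.Icc δ 1, |g.eval x - fsign x| ≤ ε)
    (hgmid : ∀ x ∈ Set.Icc (-δ) δ, |g.eval x| ≤ 1 + ε)
    (x : ℝ) (hx : |x| ≤ 1) :
    |1 / 2 * (x * (1 + g.eval x)) - max x 0| ≤ max (ε / 2) (δ * (1 + ε / 2)) := by
  obtain ⟨hxl, hxr⟩ := abs_le.mp hx
  rcases le_or_gt δ x with h | h
  · -- x ≥ δ > 0
    have hx0 : 0 < x := lt_of_lt_of_le hδ0 h
    have hb := hg x (Or.inr ⟨h, hxr⟩)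
    have hfs : fsign x = 1 := by unfold fsign; rw [if_pos hx0]
    rw [hfs] at hb
    rw [max_eq_left hx0.le,
      show 1 / 2 * (x * (1 + g.eval x)) - x = x / 2 * (g.eval x - 1) by ring, abs_mul]
    have h1 : |x / 2| ≤ 1 / 2 := by rw [abs_div, abs_two]; linarith [abs_le.mpr ⟨hxl, hxr⟩]
    have h2 : |x / 2| * |g.eval x - 1| ≤ 1 / 2 * ε :=
      mul_le_mul h1 hb (abs_nonneg _) (by norm_num)
    have := le_max_left (ε / 2) (δ * (1 + ε / 2))
    linarith
  rcases le_or_gt x (-δ) with h' | h'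
  · -- x ≤ -δ < 0
    have hx0 : x < 0 := lt_of_le_of_lt h' (by linarith)
    have hb := hg x (Or.inl ⟨hxl, h'⟩)
    have hfs : fsign x = -1 := by
      unfold fsign; rw [if_neg (not_lt.mpr hx0.le), if_neg hx0.ne]
    rw [hfs, sub_neg_eq_add] at hb
    rw [max_eq_right hx0.le,
      show 1 / 2 * (x * (1 + g.eval x)) - 0 = x / 2 * (g.eval x + 1) by ring, abs_mul]
    have h1 : |x / 2| ≤ 1 / 2 := by rw [abs_div, abs_two]; linarith [abs_le.mpr ⟨hxl, hxr⟩]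
    have h2 : |x / 2| * |g.eval x + 1| ≤ 1 / 2 * ε :=
      mul_le_mul h1 hb (abs_nonneg _) (by norm_num)
    have := le_max_left (ε / 2) (δ * (1 + ε / 2))
    linarith
  · -- -δ < x < δ
    have hb := hgmid x ⟨h'.le, h.le⟩
    obtain ⟨hb1, hb2⟩ := abs_le.mp hb
    have hxd : |x / 2| ≤ δ / 2 := by
      rw [abs_div, abs_two]
      have : |x| ≤ δ := abs_le.mpr ⟨h'.le, h.le⟩
      linarith
    have hmr := le_max_right (ε / 2) (δ * (1 + ε / 2))
    rcases le_or_gt 0 x with hx0 | hx0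
    · rw [max_eq_left hx0,
        show 1 / 2 * (x * (1 + g.eval x)) - x = x / 2 * (g.eval x - 1) by ring, abs_mul]
      have h3 : |g.eval x - 1| ≤ 2 + ε := by rw [abs_le]; constructor <;> linarith
      have h2 : |x / 2| * |g.eval x - 1| ≤ δ / 2 * (2 + ε) :=
        mul_le_mul hxd h3 (abs_nonneg _) (by linarith)
      nlinarith
    · rw [max_eq_right hx0.le,
        show 1 / 2 * (x * (1 + g.eval x)) - 0 = x / 2 * (g.eval x + 1) by ring, abs_mul]
      have h3 : |g.eval x + 1| ≤ 2 + ε := by rw [abs_le]; constructor <;> linarith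
      have h2 : |x / 2| * |g.eval x + 1| ≤ δ / 2 * (2 + ε) :=
        mul_le_mul hxd h3 (abs_nonneg _) (by linarith)
      nlinarith

end aux

/-- If `g` approximates the sign function within `ε` on `[−1,−δ] ∪ [δ,1]` and is bounded by
`1 + ε` on `[−δ,δ]`, then the polynomial-filter surrogate `(1/2) X (Iₙ + g(X))` approximates
the PSD-cone projection of `X` within `√n · max{ε/2, δ(1 + ε/2)}` in Frobenius norm, provided
all eigenvalues of `X` lie in `[−1,1]`. -/
theorem sign_filter_projection_bound {n : ℕ} (X Q : Matrix (Fin n) (Fin n) ℝ) (l : Fin n → ℝ)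
    (hQ : Qᵀ * Q = 1) (hX : X = Q * Matrix.diagonal l * Qᵀ)
    (hl : ∀ i, |l i| ≤ 1)
    (g : Polynomial ℝ) (ε δ : ℝ) (hε : 0 ≤ ε) (hδ0 : 0 < δ) (hδ1 : δ < 1)
    (hg : ∀ x ∈ Set.Icc (-1 : ℝ) (-δ) ∪ Set.Icc δ 1, |g.eval x - fsign x| ≤ ε)
    (hgmid : ∀ x ∈ Set.Icc (-δ) δ, |g.eval x| ≤ 1 + ε) :
    frobNorm ((1 / 2 : ℝ) • (X * (1 + (Polynomial.aeval X) g))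
        - Q * Matrix.diagonal (fun i => max (l i) 0) * Qᵀ)
      ≤ Real.sqrt n * max (ε / 2) (δ * (1 + ε / 2)) := by
  have hQ' : Q * Qᵀ = 1 := mul_eq_one_comm.mp hQ
  set M := max (ε / 2) (δ * (1 + ε / 2)) with hM
  have hM0 : 0 ≤ M := le_trans (by linarith) (le_max_left _ _)
  set h : Fin n → ℝ := fun i => 1 / 2 * (l i * (1 + g.eval (l i))) - max (l i) 0 with hh
  have hA : (1 / 2 : ℝ) • (X * (1 + (Polynomial.aeval X) g))
      - Q * Matrix.diagonal (fun i => max (l i) 0) * Qᵀ = Q * Matrix.diagonal h * Qᵀ := by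
    rw [hX, myAevalConjDiag Q l hQ g]
    have e1 : Q * diagonal l * Qᵀ * (1 + Q * diagonal (fun i => g.eval (l i)) * Qᵀ)
        = Q * (diagonal l + diagonal l * diagonal (fun i => g.eval (l i))) * Qᵀ := by
      rw [Matrix.mul_add, Matrix.mul_one]
      calc Q * diagonal l * Qᵀ + Q * diagonal l * Qᵀ * (Q * diagonal (fun i => g.eval (l i)) * Qᵀ)
          = Q * diagonal l * Qᵀ
            + Q * diagonal l * (Qᵀ * Q) * diagonal (fun i => g.eval (l i)) * Qᵀ := by
            simp only [Matrix.mul_assoc]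
        _ = Q * diagonal l * Qᵀ
            + Q * (diagonal l * diagonal (fun i => g.eval (l i))) * Qᵀ := by
            rw [hQ]; simp only [Matrix.mul_assoc, Matrix.mul_one, Matrix.one_mul]
        _ = _ := by rw [Matrix.mul_add, Matrix.add_mul]
    rw [e1]
    have e2 : (1 / 2 : ℝ) • (Q * (diagonal l + diagonal l * diagonal (fun i => g.eval (l i))) * Qᵀ)
        = Q * ((1 / 2 : ℝ) • (diagonal l + diagonal l * diagonal (fun i => g.eval (l i)))) * Qᵀ := by
      rw [Matrix.mul_smul, Matrix.smul_mul]
    rw [e2, ← Matrix.sub_mul, ← Matrix.mul_sub]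
    congr 2
    ext i j
    rcases eq_or_ne i j with rfl | hij
    · simp only [Matrix.sub_apply, Matrix.smul_apply, Matrix.add_apply, Matrix.mul_apply,
        Matrix.diagonal_mul_diagonal, Matrix.diagonal_apply_eq, smul_eq_mul, hh]
      ring
    · simp [Matrix.diagonal_apply_ne _ hij, Matrix.sub_apply, Matrix.smul_apply,
        Matrix.add_apply, hij]
  rw [hA, myFrobConj Q hQ]
  unfold frobNorm
  have hsum : ∀ i : Fin n, ∑ j, (Matrix.diagonal h i j) ^ 2 = h i ^ 2 := by
    intro i
    rw [Finset.sum_eq_single i]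
    · rw [Matrix.diagonal_apply_eq]
    · intro j _ hj
      rw [Matrix.diagonal_apply_ne _ hj.symm]
      norm_num
    · intro hi; exact absurd (Finset.mem_univ i) hi
  have hkey : ∀ i, |h i| ≤ M := fun i =>
    myScalarBound g ε δ hε hδ0 hδ1 hg hgmid (l i) (hl i)
  have hle : ∑ i, ∑ j, (Matrix.diagonal h i j) ^ 2 ≤ (n : ℝ) * M ^ 2 := by
    calc ∑ i, ∑ j, (Matrix.diagonal h i j) ^ 2 = ∑ i : Fin n, h i ^ 2 := by
          exact Finset.sum_congr rfl fun i _ => hsum i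
      _ ≤ ∑ _i : Fin n, M ^ 2 := by
          apply Finset.sum_le_sum
          intro i _
          calc h i ^ 2 = |h i| ^ 2 := (sq_abs _).symm
            _ ≤ M ^ 2 := pow_le_pow_left₀ (abs_nonneg _) (hkey i) 2
      _ = (n : ℝ) * M ^ 2 := by
          rw [Finset.sum_const, Finset.card_fin, nsmul_eq_mul]
  calc Real.sqrt (∑ i, ∑ j, (Matrix.diagonal h i j) ^ 2)
      ≤ Real.sqrt ((n : ℝ) * M ^ 2) := Real.sqrt_le_sqrt hle
    _ = Real.sqrt n * M := by
        rw [Real.sqrt_mul (Nat.cast_nonneg n), Real.sqrt_sq hM0]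
end
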